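/- arXiv:math/0409087 — 4 statements merged into one kernel-verified Lean document; each statement's English description precedes it below -/
import Mathlib

section
/- There exists a group homomorphism φ: [F₂,F₂] → ℤ, invariant under conjugation by F₂, with φ([x,y]) = -1. Consequently [x,y] is not a product of two squares in F₂ (theorem of Lyndon and Newman). -/
/-!
Map `F₂` to the integral Heisenberg group by `x ↦ (1,0,0)`, `y ↦ (0,1,0)`. The commutator
subgroup lands in the centre `{(0,0,c)}`, so the central coordinate `c` is a homomorphism on
`[F₂,F₂]` that is invariant under conjugation by `F₂`, and it takes the value `-1` at `⁅x,y⁆`;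
its sign `(-1)^c` is the required `φ`.
If `⁅x,y⁆ = a²b²`, then `ab ∈ [F₂,F₂]` because the abelianization of `F₂` is torsion free, and
`a²b² = (a (ab) a⁻¹) (ab)`, so invariance gives `φ ⁅x,y⁆ = φ(ab)² ≥ 0`, a contradiction.
-/

open scoped commutatorElement

/-- The free group on two generators. -/
abbrev F2 : Type := FreeGroup Bool

/-- The first generator. -/
def x : F2 := FreeGroup.of true
/-- The second generator. -/
def y : F2 := FreeGroup.of false

/-- A homomorphism `φ : [F₂,F₂] → ℤ` is invariant under conjugation by `F₂`. -/
def ConjInvariant (φ : ↥(commutator F2) →* ℤ) : Prop :=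
  ∀ (a : F2) (ha : a ∈ commutator F2) (h : F2) (hc : h⁻¹ * a * h ∈ commutator F2),
    φ ⟨h⁻¹ * a * h, hc⟩ = φ ⟨a, ha⟩

lemma commutatorElt_mem : ⁅x, y⁆ ∈ commutator F2 := by
  rw [commutator_def]
  exact Subgroup.commutator_mem_commutator (Subgroup.mem_top _) (Subgroup.mem_top _)

@[ext] structure Heisenberg where
  a : ℤ
  b : ℤ
  c : ℤ

namespace Heisenberg

/- `(a, b, c)` is the unitriangular matrix `[[1, b, c], [0, 1, a], [0, 0, 1]]`. -/
instance : Mul Heisenberg := ⟨fun g h => ⟨g.a + h.a, g.b + h.b, g.c + h.c + g.b * h.a⟩⟩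
instance : One Heisenberg := ⟨⟨0, 0, 0⟩⟩
instance : Inv Heisenberg := ⟨fun g => ⟨-g.a, -g.b, -g.c + g.b * g.a⟩⟩

@[simp] lemma mul_a (g h : Heisenberg) : (g * h).a = g.a + h.a := rfl
@[simp] lemma mul_b (g h : Heisenberg) : (g * h).b = g.b + h.b := rfl
@[simp] lemma mul_c (g h : Heisenberg) : (g * h).c = g.c + h.c + g.b * h.a := rfl
@[simp] lemma one_a : (1 : Heisenberg).a = 0 := rfl
@[simp] lemma one_b : (1 : Heisenberg).b = 0 := rfl
@[simp] lemma one_c : (1 : Heisenberg).c = 0 := rfl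
@[simp] lemma inv_a (g : Heisenberg) : g⁻¹.a = -g.a := rfl
@[simp] lemma inv_b (g : Heisenberg) : g⁻¹.b = -g.b := rfl
@[simp] lemma inv_c (g : Heisenberg) : g⁻¹.c = -g.c + g.b * g.a := rfl

instance : Group Heisenberg where
  mul_assoc g h k := by ext <;> simp <;> ring
  one_mul g := by ext <;> simp
  mul_one g := by ext <;> simp
  inv_mul_cancel g := by ext <;> simp

lemma conj_eq_self {g : Heisenberg} (ha : g.a = 0) (hb : g.b = 0) (h : Heisenberg) :
    h⁻¹ * g * h = g := by
  ext <;> simp [ha, hb]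
  ring

def projAB : Heisenberg →* Multiplicative (ℤ × ℤ) where
  toFun g := Multiplicative.ofAdd (g.a, g.b)
  map_one' := rfl
  map_mul' _ _ := rfl

variable {G : Type*} [Group G]

lemma map_a_eq_zero_and_b_eq_zero_of_mem_commutator (f : G →* Heisenberg) {g : G}
    (hg : g ∈ commutator G) : (f g).a = 0 ∧ (f g).b = 0 := by
  have hker := Abelianization.commutator_subset_ker (projAB.comp f) hg
  simpa [projAB] using hker

def centralCoord (f : G →* Heisenberg) : commutator G →* Multiplicative ℤ where
  toFun g := Multiplicative.ofAdd (f g).c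
  map_one' := by simp
  map_mul' g h := by
    simp [(map_a_eq_zero_and_b_eq_zero_of_mem_commutator f g.2).2, ← ofAdd_add]

lemma centralCoord_conj (f : G →* Heisenberg) {g : G} (hg : g ∈ commutator G) (h : G)
    (hc : h⁻¹ * g * h ∈ commutator G) :
    centralCoord f ⟨h⁻¹ * g * h, hc⟩ = centralCoord f ⟨g, hg⟩ := by
  obtain ⟨ha, hb⟩ := map_a_eq_zero_and_b_eq_zero_of_mem_commutator f hg
  simp only [centralCoord, MonoidHom.coe_mk, OneHom.coe_mk, map_mul, map_inv,
    conj_eq_self ha hb]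

end Heisenberg

noncomputable def toHeisenberg : F2 →* Heisenberg :=
  FreeGroup.lift fun i => if i then ⟨1, 0, 0⟩ else ⟨0, 1, 0⟩

@[simp] lemma toHeisenberg_x : toHeisenberg x = ⟨1, 0, 0⟩ := by simp [toHeisenberg, x]
@[simp] lemma toHeisenberg_y : toHeisenberg y = ⟨0, 1, 0⟩ := by simp [toHeisenberg, y]

noncomputable def lyndonNewmanHom : commutator F2 →* ℤ :=
  (Units.coeHom ℤ).comp ((zpowersHom ℤˣ (-1)).comp (Heisenberg.centralCoord toHeisenberg))

lemma conjInvariant_lyndonNewmanHom : ConjInvariant lyndonNewmanHom := by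
  intro g hg h hc
  simp only [lyndonNewmanHom, MonoidHom.comp_apply, Heisenberg.centralCoord_conj _ hg h hc]

lemma lyndonNewmanHom_commutator : lyndonNewmanHom ⟨⁅x, y⁆, commutatorElt_mem⟩ = -1 := by
  simp [lyndonNewmanHom, Heisenberg.centralCoord, commutatorElement_def]

instance (α : Type*) : IsAddTorsionFree (FreeAbelianGroup α) :=
  Function.Injective.isAddTorsionFree (FreeAbelianGroup.equivFinsupp α).toAddMonoidHom
    (FreeAbelianGroup.equivFinsupp α).injective

instance (α : Type*) : IsMulTorsionFree (Abelianization (FreeGroup α)) :=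
  inferInstanceAs (IsMulTorsionFree (Multiplicative (FreeAbelianGroup α)))

lemma mul_mem_commutator_of_sq_mul_sq_mem {G : Type*} [Group G]
    [IsMulTorsionFree (Abelianization G)] {a b : G} (h : a ^ 2 * b ^ 2 ∈ commutator G) :
    a * b ∈ commutator G := by
  rw [← Abelianization.ker_of, MonoidHom.mem_ker] at h ⊢
  rw [map_mul, map_pow, map_pow, ← mul_pow] at h
  exact (pow_eq_one_iff.mp h).resolve_right two_ne_zero

lemma ConjInvariant.exists_sq_of_eq_sq_mul_sq {φ : ↥(commutator F2) →* ℤ} (hφ : ConjInvariant φ)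
    {g a b : F2} (hg : g ∈ commutator F2) (h : g = a ^ 2 * b ^ 2) :
    ∃ c : commutator F2, φ ⟨g, hg⟩ = φ c ^ 2 := by
  have hab : a * b ∈ commutator F2 := mul_mem_commutator_of_sq_mul_sq_mem (h ▸ hg)
  have hconj : a⁻¹⁻¹ * (a * b) * a⁻¹ ∈ commutator F2 := by
    rw [inv_inv]
    exact Subgroup.Normal.conj_mem inferInstance _ hab a
  refine ⟨⟨a * b, hab⟩, ?_⟩
  calc φ ⟨g, hg⟩ = φ (⟨a⁻¹⁻¹ * (a * b) * a⁻¹, hconj⟩ * ⟨a * b, hab⟩) := by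
        congr 1; ext; simp only [h, Subgroup.coe_mul, sq]; group
    _ = φ ⟨a * b, hab⟩ ^ 2 := by rw [map_mul, hφ, sq]

/-- There is a conjugation-invariant homomorphism `φ : [F₂,F₂] → ℤ` with `φ ⁅x,y⁆ = -1`;
consequently `⁅x,y⁆` is not a product of two squares (Lyndon–Newman). -/
theorem exists_conjInvariant_hom_and_commutator_not_prod_two_squares :
    (∃ φ : ↥(commutator F2) →* ℤ, ConjInvariant φ ∧ φ ⟨⁅x, y⁆, commutatorElt_mem⟩ = -1) ∧
      ¬ ∃ a b : F2, ⁅x, y⁆ = a ^ 2 * b ^ 2 := by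
  refine ⟨⟨lyndonNewmanHom, conjInvariant_lyndonNewmanHom, lyndonNewmanHom_commutator⟩, ?_⟩
  rintro ⟨a, b, hab⟩
  obtain ⟨c, hc⟩ := conjInvariant_lyndonNewmanHom.exists_sq_of_eq_sq_mul_sq commutatorElt_mem hab
  rw [lyndonNewmanHom_commutator] at hc
  linarith [sq_nonneg (lyndonNewmanHom c)]
end

section
/- If m is an even integer, then in the free group F₂ = ⟨x,y⟩, the identity [xᵐ, yⁿ] = (x^{m/2})² · (yⁿ x^{-m/2} y^{-n})² holds; in particular [xᵐ, yⁿ] is a product of two squares. -/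
open scoped commutatorElement

theorem commutatorElement_sq_left {G : Type*} [Group G] (g h : G) :
    ⁅g ^ 2, h⁆ = g ^ 2 * (h * g⁻¹ * h⁻¹) ^ 2 := by
  rw [commutatorElement_def, conj_pow, inv_pow]
  simp only [mul_assoc]

/-- If `m` is even then `⁅xᵐ, yⁿ⁆ = (x^(m/2))² * (yⁿ * x^(-m/2) * y⁻ⁿ)²`; in particular
`⁅xᵐ, yⁿ⁆` is a product of two squares. -/
theorem commutator_eq_two_squares_of_even (m n : ℤ) (hm : Even m) :
    ⁅x ^ m, y ^ n⁆ = (x ^ (m / 2)) ^ 2 * (y ^ n * x ^ (-(m / 2)) * y ^ (-n)) ^ 2 ∧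
      ∃ a b : F2, ⁅x ^ m, y ^ n⁆ = a ^ 2 * b ^ 2 := by
  have hxm : x ^ m = (x ^ (m / 2)) ^ 2 := by
    rw [← zpow_natCast, ← zpow_mul, Nat.cast_ofNat, Int.ediv_mul_cancel hm.two_dvd]
  have key : ⁅x ^ m, y ^ n⁆ = (x ^ (m / 2)) ^ 2 * (y ^ n * x ^ (-(m / 2)) * y ^ (-n)) ^ 2 := by
    rw [hxm, commutatorElement_sq_left, zpow_neg, zpow_neg]
  exact ⟨key, _, _, key⟩
end

section
/- For each k ≥ 2 there exists an element g of the commutator subgroup [F₂,F₂] whose image in H₁ of the universal abelian cover has P-coordinate P(x,y) = −(y−1)ᵏ and Q-coordinate Q(x,y) = (y−1)^{k−1}(x−1); for such g, φⱼ(g) = 0 for all j < k, φₖ(g) = −1, and ψⱼ(g) = 0 for all j, where φⱼ(α) = f⁽ʲ⁾(1)/j! with f(y) = P(1,y) and ψⱼ(α) = g⁽ʲ⁾(1)/j! with g(x) = Q(x,1). -/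
/-- The Laurent polynomial ring `ℤ[x^{±1}, y^{±1}]`, as the group algebra `ℤ[ℤ²]`. -/
abbrev R2 : Type := AddMonoidAlgebra ℤ (ℤ × ℤ)

/-- The monomial `x^{a.1} y^{a.2}`. -/
noncomputable def mono (a : ℤ × ℤ) : R2 := AddMonoidAlgebra.single a 1

/-- The variable `x`. -/
noncomputable def X : R2 := mono (1, 0)
/-- The variable `y`. -/
noncomputable def Y : R2 := mono (0, 1)

lemma mono_add (a b : ℤ × ℤ) : mono (a + b) = mono a * mono b := by
  simp [mono, AddMonoidAlgebra.single_mul_single]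

lemma mono_zero : mono 0 = 1 := rfl

/-- Data of the lift of a loop to the universal abelian cover of the wedge of two
circles: the endpoint (= abelianized image) together with the 1-chain `P·X + Q·Y`
(the coefficients are the abelianized Fox derivatives). -/
structure FoxData where
  ab : ℤ × ℤ
  P : R2
  Q : R2

noncomputable instance : Mul FoxData :=
  ⟨fun u v => ⟨u.ab + v.ab, u.P + mono u.ab * v.P, u.Q + mono u.ab * v.Q⟩⟩
noncomputable instance : One FoxData := ⟨⟨0, 0, 0⟩⟩
noncomputable instance : Inv FoxData :=
  ⟨fun u => ⟨-u.ab, -(mono (-u.ab) * u.P), -(mono (-u.ab) * u.Q)⟩⟩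

@[simp] lemma mul_ab (u v : FoxData) : (u * v).ab = u.ab + v.ab := rfl
@[simp] lemma mul_P (u v : FoxData) : (u * v).P = u.P + mono u.ab * v.P := rfl
@[simp] lemma mul_Q (u v : FoxData) : (u * v).Q = u.Q + mono u.ab * v.Q := rfl
@[simp] lemma one_ab : (1 : FoxData).ab = 0 := rfl
@[simp] lemma one_P : (1 : FoxData).P = 0 := rfl
@[simp] lemma one_Q : (1 : FoxData).Q = 0 := rfl
@[simp] lemma inv_ab (u : FoxData) : u⁻¹.ab = -u.ab := rfl
@[simp] lemma inv_P (u : FoxData) : u⁻¹.P = -(mono (-u.ab) * u.P) := rfl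
@[simp] lemma inv_Q (u : FoxData) : u⁻¹.Q = -(mono (-u.ab) * u.Q) := rfl

lemma FoxData.ext' {u v : FoxData} (h1 : u.ab = v.ab) (h2 : u.P = v.P) (h3 : u.Q = v.Q) :
    u = v := by cases u; cases v; simp_all

noncomputable instance : Group FoxData where
  mul_assoc u v w := FoxData.ext' (by simp [add_assoc]) (by simp [mono_add]; ring)
    (by simp [mono_add]; ring)
  one_mul u := FoxData.ext' (by simp) (by simp [mono_zero]) (by simp [mono_zero])
  mul_one u := FoxData.ext' (by simp) (by simp) (by simp)
  inv_mul_cancel u := FoxData.ext' (by simp) (by simp [← mono_add]) (by simp [← mono_add])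

/-- The homomorphism computing the lift of a loop to the universal abelian cover:
`(D g).P` and `(D g).Q` are the coefficients of the lifted 1-chain of `g`
(for `g ∈ [F₂,F₂]` this chain is a 1-cycle, the homology class of `g`). -/
noncomputable def D : F2 →* FoxData :=
  FreeGroup.lift fun b => if b then ⟨(1, 0), 1, 0⟩ else ⟨(0, 1), 0, 1⟩

/-- `φₖ(P) = f⁽ᵏ⁾(1)/k!` where `f(y) = P(1,y)`: in terms of coefficients,
`φₖ(P) = Σ_{(i,j)} C(j,k) · P_{(i,j)}` (generalized binomial coefficients). -/
noncomputable def phi (k : ℕ) (P : R2) : ℤ := P.coeff.sum fun a c => Ring.choose a.2 k * c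
/-- `ψₖ(Q) = g⁽ᵏ⁾(1)/k!` where `g(x) = Q(x,1)`. -/
noncomputable def psi (k : ℕ) (Q : R2) : ℤ := Q.coeff.sum fun a c => Ring.choose a.1 k * c

/-!
The witnesses are the iterated commutators `g₀ = [x, y]`, `gₙ₊₁ = [y, gₙ]`. The Fox coefficients
of a commutator are `∂[u, v] = (t_u - 1) ∂v - (t_v - 1) ∂u`, with `t_u` the monomial of the
abelianized image of `u`, so the commutator of `y` with a null-homologous loop has both
coefficients of the loop multiplied by `y - 1`. On the other side, `φⱼ` is the
`j`-th Taylor coefficient of `P(1, y)` at `y = 1`, hence `φⱼ((y - 1)ᵏ) = δⱼₖ`, while `ψⱼ` only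
sees `Q(x, 1)` and therefore kills every multiple of `y - 1`.
-/

open scoped commutatorElement

lemma mono_mul_mono_neg (a : ℤ × ℤ) : mono a * mono (-a) = 1 := by
  rw [← mono_add, add_neg_cancel, mono_zero]

lemma FoxData.commutatorElement_eq (u v : FoxData) :
    ⁅u, v⁆ = ⟨0, (mono u.ab - 1) * v.P - (mono v.ab - 1) * u.P,
      (mono u.ab - 1) * v.Q - (mono v.ab - 1) * u.Q⟩ := by
  have hu := mono_mul_mono_neg u.ab
  have hv := mono_mul_mono_neg v.ab
  refine FoxData.ext' ?_ ?_ ?_ <;> simp only [commutatorElement_def, mul_ab, mul_P, mul_Q,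
    inv_ab, inv_P, inv_Q, mono_add]
  · abel
  · linear_combination (-mono v.ab * u.P - mono v.ab * mono (-v.ab) * v.P) * hu - v.P * hv
  · linear_combination (-mono v.ab * u.Q - mono v.ab * mono (-v.ab) * v.Q) * hu - v.Q * hv

lemma D_x : D x = ⟨(1, 0), 1, 0⟩ := FreeGroup.lift_apply_of
lemma D_y : D y = ⟨(0, 1), 0, 1⟩ := FreeGroup.lift_apply_of

noncomputable def nestedCommutator : ℕ → F2
  | 0 => ⁅x, y⁆
  | n + 1 => ⁅y, nestedCommutator n⁆

lemma nestedCommutator_mem_commutator (n : ℕ) : nestedCommutator n ∈ commutator F2 := by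
  cases n <;> exact Subgroup.commutator_mem_commutator (Subgroup.mem_top _) (Subgroup.mem_top _)

lemma D_nestedCommutator (n : ℕ) :
    D (nestedCommutator n) = ⟨0, -(Y - 1) ^ (n + 1), (Y - 1) ^ n * (X - 1)⟩ := by
  have hX : mono (1, 0) = X := rfl
  have hY : mono (0, 1) = Y := rfl
  induction n with
  | zero =>
    rw [nestedCommutator, map_commutatorElement, D_x, D_y, FoxData.commutatorElement_eq]
    refine FoxData.ext' rfl ?_ ?_ <;> simp only [hX, hY] <;> ring
  | succ n ih =>
    rw [nestedCommutator, map_commutatorElement, ih, D_y, FoxData.commutatorElement_eq]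
    refine FoxData.ext' rfl ?_ ?_ <;> simp only [hY, mono_zero] <;> ring

lemma Y_mul_single (a : ℤ × ℤ) (c : ℤ) :
    Y * AddMonoidAlgebra.single a c = AddMonoidAlgebra.single ((0, 1) + a) c := by
  rw [Y, mono, AddMonoidAlgebra.single_mul_single, one_mul]

noncomputable def phiHom (j : ℕ) : R2 →+ ℤ where
  toFun := phi j
  map_zero' := Finsupp.sum_zero_index
  map_add' P Q := by
    unfold phi
    rw [AddMonoidAlgebra.coeff_add]
    exact Finsupp.sum_add_index' (by simp) (by intros; ring)

noncomputable def psiHom (j : ℕ) : R2 →+ ℤ where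
  toFun := psi j
  map_zero' := Finsupp.sum_zero_index
  map_add' P Q := by
    unfold psi
    rw [AddMonoidAlgebra.coeff_add]
    exact Finsupp.sum_add_index' (by simp) (by intros; ring)

lemma phi_zero (j : ℕ) : phi j 0 = 0 := map_zero (phiHom j)
lemma phi_add (j : ℕ) (P Q : R2) : phi j (P + Q) = phi j P + phi j Q := map_add (phiHom j) P Q
lemma phi_sub (j : ℕ) (P Q : R2) : phi j (P - Q) = phi j P - phi j Q := map_sub (phiHom j) P Q
lemma phi_neg (j : ℕ) (P : R2) : phi j (-P) = -phi j P := map_neg (phiHom j) P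
lemma psi_add (j : ℕ) (P Q : R2) : psi j (P + Q) = psi j P + psi j Q := map_add (psiHom j) P Q
lemma psi_sub (j : ℕ) (P Q : R2) : psi j (P - Q) = psi j P - psi j Q := map_sub (psiHom j) P Q

lemma phi_single (j : ℕ) (a : ℤ × ℤ) (c : ℤ) :
    phi j (AddMonoidAlgebra.single a c) = Ring.choose a.2 j * c := by
  unfold phi
  rw [AddMonoidAlgebra.coeff_single]
  exact Finsupp.sum_single_index (by simp)

lemma psi_single (j : ℕ) (a : ℤ × ℤ) (c : ℤ) :
    psi j (AddMonoidAlgebra.single a c) = Ring.choose a.1 j * c := by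
  unfold psi
  rw [AddMonoidAlgebra.coeff_single]
  exact Finsupp.sum_single_index (by simp)

lemma phi_zero_Y_mul (P : R2) : phi 0 (Y * P) = phi 0 P := by
  induction P using AddMonoidAlgebra.induction_linear with
  | zero => rw [mul_zero]
  | add P Q hP hQ => rw [mul_add, phi_add, phi_add, hP, hQ]
  | single a c => simp only [Y_mul_single, phi_single, Ring.choose_zero_right]

lemma phi_succ_Y_mul (j : ℕ) (P : R2) : phi (j + 1) (Y * P) = phi (j + 1) P + phi j P := by
  induction P using AddMonoidAlgebra.induction_linear with
  | zero => rw [mul_zero, phi_zero, phi_zero, add_zero]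
  | add P Q hP hQ => rw [mul_add, phi_add, phi_add, phi_add, hP, hQ]; ring
  | single a c =>
    rw [Y_mul_single, phi_single, phi_single, phi_single, Prod.snd_add, add_comm,
      Ring.choose_succ_succ]
    ring

lemma psi_Y_mul (j : ℕ) (P : R2) : psi j (Y * P) = psi j P := by
  induction P using AddMonoidAlgebra.induction_linear with
  | zero => rw [mul_zero]
  | add P Q hP hQ => rw [mul_add, psi_add, psi_add, hP, hQ]
  | single a c => simp only [Y_mul_single, psi_single, Prod.fst_add, zero_add]

lemma phi_zero_Y_sub_one_mul (P : R2) : phi 0 ((Y - 1) * P) = 0 := by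
  rw [sub_mul, one_mul, phi_sub, phi_zero_Y_mul, sub_self]

lemma phi_succ_Y_sub_one_mul (j : ℕ) (P : R2) : phi (j + 1) ((Y - 1) * P) = phi j P := by
  rw [sub_mul, one_mul, phi_sub, phi_succ_Y_mul, add_sub_cancel_left]

lemma psi_Y_sub_one_mul (j : ℕ) (P : R2) : psi j ((Y - 1) * P) = 0 := by
  rw [sub_mul, one_mul, psi_sub, psi_Y_mul, sub_self]

lemma phi_Y_sub_one_pow_of_lt {j k : ℕ} (h : j < k) : phi j ((Y - 1) ^ k) = 0 := by
  induction k generalizing j with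
  | zero => omega
  | succ k ih =>
    rw [pow_succ']
    cases j with
    | zero => exact phi_zero_Y_sub_one_mul _
    | succ j => rw [phi_succ_Y_sub_one_mul]; exact ih (by omega)

lemma phi_Y_sub_one_pow_self (k : ℕ) : phi k ((Y - 1) ^ k) = 1 := by
  induction k with
  | zero => rw [pow_zero, show (1 : R2) = AddMonoidAlgebra.single 0 1 from rfl, phi_single,
      Ring.choose_zero_right, mul_one]
  | succ k ih => rw [pow_succ', phi_succ_Y_sub_one_mul, ih]

/-- For each `k ≥ 2` there is a `g ∈ [F₂,F₂]` whose homology class in the universal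
abelian cover has `P = -(y-1)ᵏ` and `Q = (y-1)^{k-1}(x-1)`; any such `g` satisfies
`φⱼ(g) = 0` for `j < k`, `φₖ(g) = -1`, and `ψⱼ(g) = 0` for all `j`. -/
theorem exists_elt_with_vanishing_phi (k : ℕ) (hk : 2 ≤ k) :
    (∃ g : F2, g ∈ commutator F2 ∧
        (D g).P = -(Y - 1) ^ k ∧ (D g).Q = (Y - 1) ^ (k - 1) * (X - 1)) ∧
      ∀ g : F2, g ∈ commutator F2 →
        (D g).P = -(Y - 1) ^ k → (D g).Q = (Y - 1) ^ (k - 1) * (X - 1) →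
          (∀ j < k, phi j (D g).P = 0) ∧ phi k (D g).P = -1 ∧
            ∀ j : ℕ, psi j (D g).Q = 0 := by
  obtain ⟨n, rfl⟩ : ∃ n, k = n + 2 := ⟨k - 2, by omega⟩
  refine ⟨⟨nestedCommutator (n + 1), nestedCommutator_mem_commutator _, ?_⟩, ?_⟩
  · rw [D_nestedCommutator]
    exact ⟨rfl, rfl⟩
  · intro g _ hP hQ
    refine ⟨fun j hj => ?_, ?_, fun j => ?_⟩
    · rw [hP, phi_neg, phi_Y_sub_one_pow_of_lt hj, neg_zero]
    · rw [hP, phi_neg, phi_Y_sub_one_pow_self]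
    · rw [hQ, show n + 2 - 1 = n + 1 from rfl, pow_succ', mul_assoc, psi_Y_sub_one_mul]
end

section
/- There is an element g in [F₂,F₂] (namely one whose homology class in the universal abelian cover is (x−1)(y−1) times the class of [x,y]) for which f_γ(y) := P_γ(1,y) = 0 and g_γ(x) := Q_γ(x,1) = 0 identically; hence all the homomorphisms φⱼ and ψⱼ vanish on g. -/
/-- Substitution `x = 1`, giving the one-variable Laurent polynomial `P(1,y)`. -/
noncomputable def subX1 (P : R2) : LaurentPolynomial ℤ :=
  P.coeff.sum fun a c => AddMonoidAlgebra.single a.2 c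
/-- Substitution `y = 1`, giving the one-variable Laurent polynomial `Q(x,1)`. -/
noncomputable def subY1 (Q : R2) : LaurentPolynomial ℤ :=
  Q.coeff.sum fun a c => AddMonoidAlgebra.single a.1 c

/-! For `h` in the commutator subgroup, `⁅g, h⁆` has class `(ḡ - 1) · [h]`, where `ḡ` is the
monomial of the abelianization of `g`. Hence `⁅x, ⁅y, ⁅x, y⁆⁆⁆` has class `(x - 1)(y - 1) α`.
The substitutions `x = 1` and `y = 1` are ring homomorphisms (induced by the projections
`ℤ² → ℤ`), so they kill `P_γ` and `Q_γ`, which are multiples of `x - 1` and of `y - 1`;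
and `φⱼ`, `ψⱼ` factor through these substitutions. -/

open scoped commutatorElement

namespace FoxData

lemma commutatorElement_ab (u v : FoxData) : ⁅u, v⁆.ab = 0 := by
  simp [commutatorElement_def]

lemma commutatorElement_P (u v : FoxData) :
    ⁅u, v⁆.P = (mono u.ab - 1) * v.P - (mono v.ab - 1) * u.P := by
  simp only [commutatorElement_def, mul_P, inv_P, mul_ab, inv_ab, mul_neg, ← mul_assoc,
    ← mono_add, add_neg_cancel_comm, add_neg_cancel, mono_zero, one_mul]
  ring

lemma commutatorElement_Q (u v : FoxData) :
    ⁅u, v⁆.Q = (mono u.ab - 1) * v.Q - (mono v.ab - 1) * u.Q := by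
  simp only [commutatorElement_def, mul_Q, inv_Q, mul_ab, inv_ab, mul_neg, ← mul_assoc,
    ← mono_add, add_neg_cancel_comm, add_neg_cancel, mono_zero, one_mul]
  ring

end FoxData

lemma D_commutatorElement_ab (g h : F2) : (D ⁅g, h⁆).ab = 0 := by
  rw [map_commutatorElement, FoxData.commutatorElement_ab]

lemma D_commutatorElement_x_y : D ⁅x, y⁆ = ⟨0, -(Y - 1), X - 1⟩ := by
  refine FoxData.ext' (D_commutatorElement_ab x y) ?_ ?_ <;>
    simp [map_commutatorElement, FoxData.commutatorElement_P, FoxData.commutatorElement_Q,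
      D_x, D_y, X, Y]

lemma D_commutatorElement_of_ab_eq_zero (g : F2) {h : F2} (hh : (D h).ab = 0) :
    D ⁅g, h⁆ = ⟨0, (mono (D g).ab - 1) * (D h).P, (mono (D g).ab - 1) * (D h).Q⟩ := by
  refine FoxData.ext' (D_commutatorElement_ab g h) ?_ ?_ <;>
    simp [map_commutatorElement, FoxData.commutatorElement_P, FoxData.commutatorElement_Q, hh,
      mono_zero]

lemma subX1_eq_mapDomainRingHom (P : R2) :
    subX1 P = AddMonoidAlgebra.mapDomainRingHom ℤ (AddMonoidHom.snd ℤ ℤ) P := by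
  ext j
  simp [subX1, AddMonoidAlgebra.mapDomain, Finsupp.mapDomain]

lemma subY1_eq_mapDomainRingHom (Q : R2) :
    subY1 Q = AddMonoidAlgebra.mapDomainRingHom ℤ (AddMonoidHom.fst ℤ ℤ) Q := by
  ext j
  simp [subY1, AddMonoidAlgebra.mapDomain, Finsupp.mapDomain]

lemma subX1_eq_zero_of_dvd {P : R2} (h : X - 1 ∣ P) : subX1 P = 0 := by
  obtain ⟨P', rfl⟩ := h
  rw [subX1_eq_mapDomainRingHom, map_mul, map_sub, map_one]
  simp [X, mono]

lemma subY1_eq_zero_of_dvd {Q : R2} (h : Y - 1 ∣ Q) : subY1 Q = 0 := by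
  obtain ⟨Q', rfl⟩ := h
  rw [subY1_eq_mapDomainRingHom, map_mul, map_sub, map_one]
  simp [Y, mono]

lemma phi_eq_sum_subX1 (k : ℕ) (P : R2) :
    phi k P = (subX1 P).coeff.sum fun j c => Ring.choose j k * c := by
  simp only [subX1_eq_mapDomainRingHom, AddMonoidAlgebra.mapDomainRingHom_apply,
    AddMonoidAlgebra.coeff_mapDomain]
  rw [Finsupp.sum_mapDomain_index (fun _ => mul_zero _) (fun _ _ _ => mul_add _ _ _)]
  rfl

lemma psi_eq_sum_subY1 (k : ℕ) (Q : R2) :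
    psi k Q = (subY1 Q).coeff.sum fun j c => Ring.choose j k * c := by
  simp only [subY1_eq_mapDomainRingHom, AddMonoidAlgebra.mapDomainRingHom_apply,
    AddMonoidAlgebra.coeff_mapDomain]
  rw [Finsupp.sum_mapDomain_index (fun _ => mul_zero _) (fun _ _ _ => mul_add _ _ _)]
  rfl

lemma phi_eq_zero_of_subX1_eq_zero (k : ℕ) {P : R2} (h : subX1 P = 0) : phi k P = 0 := by
  simp [phi_eq_sum_subX1, h]

lemma psi_eq_zero_of_subY1_eq_zero (k : ℕ) {Q : R2} (h : subY1 Q = 0) : psi k Q = 0 := by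
  simp [psi_eq_sum_subY1, h]

/-- There is a `g ∈ [F₂,F₂]`, namely one whose homology class is `(x-1)(y-1)` times the
class of `⁅x,y⁆`, for which `P(1,y) = 0` and `Q(x,1) = 0` identically; hence all the
homomorphisms `φⱼ` and `ψⱼ` vanish on `g`. -/
theorem exists_elt_with_all_phi_psi_vanishing :
    ∃ g : F2, g ∈ commutator F2 ∧
      (D g).P = -(X - 1) * (Y - 1) ^ 2 ∧ (D g).Q = (X - 1) ^ 2 * (Y - 1) ∧
      subX1 (D g).P = 0 ∧ subY1 (D g).Q = 0 ∧
      ∀ j : ℕ, phi j (D g).P = 0 ∧ psi j (D g).Q = 0 := by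
  have hγ : D ⁅x, ⁅y, ⁅x, y⁆⁆⁆ = ⟨0, -(X - 1) * (Y - 1) ^ 2, (X - 1) ^ 2 * (Y - 1)⟩ := by
    rw [D_commutatorElement_of_ab_eq_zero _ (D_commutatorElement_ab _ _),
      D_commutatorElement_of_ab_eq_zero _ (D_commutatorElement_ab _ _), D_commutatorElement_x_y,
      D_x, D_y]
    refine FoxData.ext' rfl ?_ ?_ <;> simp only [X, Y] <;> ring
  have hmem : ⁅x, ⁅y, ⁅x, y⁆⁆⁆ ∈ commutator F2 := by
    rw [commutator_def]
    exact Subgroup.commutator_mem_commutator (Subgroup.mem_top _) (Subgroup.mem_top _)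
  have hP : subX1 (-(X - 1) * (Y - 1) ^ 2) = 0 := subX1_eq_zero_of_dvd ⟨-(Y - 1) ^ 2, by ring⟩
  have hQ : subY1 ((X - 1) ^ 2 * (Y - 1)) = 0 := subY1_eq_zero_of_dvd (dvd_mul_left _ _)
  refine ⟨_, hmem, ?_⟩
  rw [hγ]
  exact ⟨rfl, rfl, hP, hQ, fun j =>
    ⟨phi_eq_zero_of_subX1_eq_zero j hP, psi_eq_zero_of_subY1_eq_zero j hQ⟩⟩
end
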